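/- If f : ℍ → ℂ is smooth and satisfies (Δ_k - λ)^m f = 0, then (Δ_{2-k} - conj(λ))^m (ξ_k f) = 0. -/

import Mathlib

open Complex

/-- Partial derivative in the `x`-direction (real direction). -/
noncomputable def pdx (f : ℂ → ℂ) (z : ℂ) : ℂ := fderiv ℝ f z 1

/-- Partial derivative in the `y`-direction (imaginary direction). -/
noncomputable def pdy (f : ℂ → ℂ) (z : ℂ) : ℂ := fderiv ℝ f z Complex.I

/-- The weight `k` hyperbolic Laplacian
`Δ_k = y²(∂²/∂x² + ∂²/∂y²) - iky(∂/∂x + i∂/∂y)`. -/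
noncomputable def laplacian (k : ℤ) (f : ℂ → ℂ) (z : ℂ) : ℂ :=
  (z.im : ℂ) ^ 2 * (pdx (pdx f) z + pdy (pdy f) z)
    - Complex.I * (k : ℂ) * (z.im : ℂ) * (pdx f z + Complex.I * pdy f z)

/-- The Maass raising operator `R_k = i(∂/∂x - i∂/∂y) + k/y`. -/
noncomputable def raiseOp (k : ℤ) (f : ℂ → ℂ) (z : ℂ) : ℂ :=
  Complex.I * (pdx f z - Complex.I * pdy f z) + (k : ℂ) / (z.im : ℂ) * f z

/-- The Maass lowering operator `L_k = iy²(∂/∂x + i∂/∂y)` (independent of `k`). -/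
noncomputable def lowerOp (f : ℂ → ℂ) (z : ℂ) : ℂ :=
  Complex.I * (z.im : ℂ) ^ 2 * (pdx f z + Complex.I * pdy f z)

/-- The Bruinier–Funke operator `ξ_k f = 2i y^k conj(∂f/∂z̄)`,
where `∂/∂z̄ = ½(∂/∂x + i∂/∂y)`. -/
noncomputable def xiOp (k : ℤ) (f : ℂ → ℂ) (z : ℂ) : ℂ :=
  2 * Complex.I * (z.im : ℂ) ^ k *
    (starRingEnd ℂ) ((1 / 2) * (pdx f z + Complex.I * pdy f z))

/-! ### Auxiliary lemmas -/

section Aux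

variable {f g u v : ℂ → ℂ} {z w : ℂ} {k : ℤ}

private lemma top_le : ((⊤:ℕ∞) : WithTop ℕ∞) + 1 ≤ ((⊤:ℕ∞) : WithTop ℕ∞) := by norm_cast

private lemma one_le_top : (1 : WithTop ℕ∞) ≤ ((⊤:ℕ∞) : WithTop ℕ∞) := by norm_cast

private lemma two_le_top : (2 : WithTop ℕ∞) ≤ ((⊤:ℕ∞) : WithTop ℕ∞) := by norm_cast

/-! #### Congruence lemmas -/

lemma pdx_congr (h : f =ᶠ[nhds z] g) : pdx f z = pdx g z := by
  unfold pdx; rw [h.fderiv_eq]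

lemma pdy_congr (h : f =ᶠ[nhds z] g) : pdy f z = pdy g z := by
  unfold pdy; rw [h.fderiv_eq]

lemma pdx_congr_nhds (h : f =ᶠ[nhds z] g) : pdx f =ᶠ[nhds z] pdx g := by
  filter_upwards [h.fderiv (𝕜 := ℝ)] with w hw
  unfold pdx; rw [hw]

lemma pdy_congr_nhds (h : f =ᶠ[nhds z] g) : pdy f =ᶠ[nhds z] pdy g := by
  filter_upwards [h.fderiv (𝕜 := ℝ)] with w hw
  unfold pdy; rw [hw]

lemma laplacian_congr (h : f =ᶠ[nhds z] g) : laplacian k f z = laplacian k g z := by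
  unfold laplacian
  rw [pdx_congr (pdx_congr_nhds h), pdy_congr (pdy_congr_nhds h), pdx_congr h, pdy_congr h]

lemma xiOp_congr (h : f =ᶠ[nhds z] g) : xiOp k f z = xiOp k g z := by
  unfold xiOp; rw [pdx_congr h, pdy_congr h]

/-! #### Directional derivative computation rules -/

lemma fdapply_add (hf : DifferentiableAt ℝ f z) (hg : DifferentiableAt ℝ g z) (v : ℂ) :
    fderiv ℝ (fun w => f w + g w) z v = fderiv ℝ f z v + fderiv ℝ g z v := by
  rw [fderiv_fun_add hf hg]; rfl

lemma fdapply_sub (hf : DifferentiableAt ℝ f z) (hg : DifferentiableAt ℝ g z) (v : ℂ) :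
    fderiv ℝ (fun w => f w - g w) z v = fderiv ℝ f z v - fderiv ℝ g z v := by
  rw [fderiv_fun_sub hf hg]; rfl

lemma fdapply_const_mul (hf : DifferentiableAt ℝ f z) (c v : ℂ) :
    fderiv ℝ (fun w => c * f w) z v = c * fderiv ℝ f z v := by
  rw [fderiv_const_mul hf c]; simp

lemma fdapply_mul (hf : DifferentiableAt ℝ f z) (hg : DifferentiableAt ℝ g z) (v : ℂ) :
    fderiv ℝ (fun w => f w * g w) z v
      = fderiv ℝ f z v * g z + f z * fderiv ℝ g z v := by
  rw [fderiv_fun_mul hf hg]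
  simp [smul_eq_mul]
  ring

lemma fdapply_conj (v : ℂ) :
    fderiv ℝ (fun w => (starRingEnd ℂ) (f w)) z v = (starRingEnd ℂ) (fderiv ℝ f z v) := by
  have h : (fun w => (starRingEnd ℂ) (f w)) = fun w => star (f w) := rfl
  rw [h, fderiv_star]; simp

/-! #### The function `w ↦ (im w)^k` -/

lemma hasFDerivAt_ypow (k : ℤ) (hz : z.im ≠ 0) :
    HasFDerivAt (fun w : ℂ => ((w.im : ℂ)) ^ k)
      (((k : ℂ) * ((z.im : ℂ)) ^ (k - 1)) • (Complex.ofRealCLM.comp Complex.imCLM)) z := by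
  have h0 : ((z.im : ℂ)) ≠ 0 := Complex.ofReal_ne_zero.mpr hz
  have h1 : HasDerivAt (fun c : ℂ => c ^ k) ((k : ℂ) * ((z.im : ℂ)) ^ (k - 1)) ((z.im : ℂ)) :=
    hasDerivAt_zpow k _ (Or.inl h0)
  have h2 : HasFDerivAt (fun w : ℂ => ((w.im : ℂ)))
      (Complex.ofRealCLM.comp Complex.imCLM) z :=
    (Complex.ofRealCLM.comp Complex.imCLM).hasFDerivAt
  have h3 := (h1.hasFDerivAt.restrictScalars ℝ).comp z h2
  refine h3.congr_fderiv ?_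
  ext w
  simp [mul_comm]

lemma differentiableAt_ypow (k : ℤ) (hz : z.im ≠ 0) :
    DifferentiableAt ℝ (fun w : ℂ => ((w.im : ℂ)) ^ k) z :=
  (hasFDerivAt_ypow k hz).differentiableAt

lemma fdapply_ypow (k : ℤ) (hz : z.im ≠ 0) (v : ℂ) :
    fderiv ℝ (fun w : ℂ => ((w.im : ℂ)) ^ k) z v
      = (k : ℂ) * ((z.im : ℂ)) ^ (k - 1) * (v.im : ℂ) := by
  rw [(hasFDerivAt_ypow k hz).fderiv]
  simp [mul_comm]

/-! #### Smoothness -/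

lemma contDiff_imC : ContDiff ℝ ((⊤:ℕ∞) : WithTop ℕ∞) (fun w : ℂ => ((w.im : ℝ) : ℂ)) :=
  Complex.ofRealCLM.contDiff.comp Complex.imCLM.contDiff

lemma contDiffAt_fd (hf : ContDiffAt ℝ ((⊤:ℕ∞) : WithTop ℕ∞) f z) (v : ℂ) :
    ContDiffAt ℝ ((⊤:ℕ∞) : WithTop ℕ∞) (fun w => fderiv ℝ f w v) z :=
  (hf.fderiv_right top_le).clm_apply contDiffAt_const

lemma diffAt_fd (hf : ContDiffAt ℝ ((⊤:ℕ∞) : WithTop ℕ∞) f z) (v : ℂ) :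
    DifferentiableAt ℝ (fun w => fderiv ℝ f w v) z :=
  (contDiffAt_fd hf v).differentiableAt (by simp)

lemma contDiff_pdx (hf : ContDiff ℝ ((⊤:ℕ∞) : WithTop ℕ∞) f) :
    ContDiff ℝ ((⊤:ℕ∞) : WithTop ℕ∞) (pdx f) :=
  (hf.fderiv_right top_le).clm_apply contDiff_const

lemma contDiff_pdy (hf : ContDiff ℝ ((⊤:ℕ∞) : WithTop ℕ∞) f) :
    ContDiff ℝ ((⊤:ℕ∞) : WithTop ℕ∞) (pdy f) :=
  (hf.fderiv_right top_le).clm_apply contDiff_const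

lemma contDiff_laplacian (k : ℤ) (hf : ContDiff ℝ ((⊤:ℕ∞) : WithTop ℕ∞) f) :
    ContDiff ℝ ((⊤:ℕ∞) : WithTop ℕ∞) (laplacian k f) := by
  unfold laplacian
  exact ((contDiff_imC.pow 2).mul ((contDiff_pdx (contDiff_pdx hf)).add
      (contDiff_pdy (contDiff_pdy hf)))).sub
    (((contDiff_const.mul contDiff_imC)).mul ((contDiff_pdx hf).add
      (contDiff_const.mul (contDiff_pdy hf))))

lemma contDiffAt_ypow (k : ℤ) (hz : z.im ≠ 0) :
    ContDiffAt ℝ ((⊤:ℕ∞) : WithTop ℕ∞) (fun w : ℂ => ((w.im : ℂ)) ^ k) z := by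
  cases k with
  | ofNat n =>
    simp only [Int.ofNat_eq_coe, zpow_natCast]
    exact (contDiff_imC.pow n).contDiffAt
  | negSucc n =>
    simp only [zpow_negSucc]
    exact ((contDiff_imC.pow (n+1)).contDiffAt).inv
      (pow_ne_zero _ (Complex.ofReal_ne_zero.mpr hz))

lemma contDiffAt_xiOp (k : ℤ) (hf : ContDiff ℝ ((⊤:ℕ∞) : WithTop ℕ∞) f) (hz : z.im ≠ 0) :
    ContDiffAt ℝ ((⊤:ℕ∞) : WithTop ℕ∞) (xiOp k f) z := by
  have hinner : ContDiff ℝ ((⊤:ℕ∞) : WithTop ℕ∞)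
      (fun w => (starRingEnd ℂ) ((1 / 2 : ℂ) * (pdx f w + Complex.I * pdy f w))) := by
    have h : ContDiff ℝ ((⊤:ℕ∞) : WithTop ℕ∞)
        (fun w => (1 / 2 : ℂ) * (pdx f w + Complex.I * pdy f w)) :=
      contDiff_const.mul ((contDiff_pdx hf).add (contDiff_const.mul (contDiff_pdy hf)))
    exact Complex.conjCLE.contDiff.comp h
  exact (contDiffAt_const.mul (contDiffAt_ypow k hz)).mul hinner.contDiffAt

/-! #### Symmetry of second derivatives -/

lemma pdx_pdy_comm (hf : ContDiffAt ℝ ((⊤:ℕ∞) : WithTop ℕ∞) f z) :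
    pdx (pdy f) z = pdy (pdx f) z := by
  have hd : DifferentiableAt ℝ (fderiv ℝ f) z :=
    (hf.fderiv_right top_le).differentiableAt (by simp)
  have e : ∀ v u : ℂ, fderiv ℝ (fun w => fderiv ℝ f w u) z v
      = fderiv ℝ (fderiv ℝ f) z v u := by
    intro v u
    rw [fderiv_clm_apply hd (differentiableAt_const u)]
    simp
  have hsymm := hf.isSymmSndFDerivAt (by rw [minSmoothness_of_isRCLikeNormedField]; exact two_le_top)
  unfold pdx pdy
  rw [e, e, hsymm]

/-! #### Derivatives of `xiOp` -/

lemma fdapply_xiOp (k : ℤ) (hz : z.im ≠ 0)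
    (hf : ContDiffAt ℝ ((⊤:ℕ∞) : WithTop ℕ∞) f z) (v : ℂ) :
    fderiv ℝ (xiOp k f) z v =
      2 * Complex.I * ((k : ℂ) * ((z.im : ℂ)) ^ (k - 1) * (v.im : ℂ)
          * (starRingEnd ℂ) ((1 / 2) * (pdx f z + Complex.I * pdy f z))
        + ((z.im : ℂ)) ^ k * (starRingEnd ℂ)
            ((1 / 2) * (fderiv ℝ (pdx f) z v + Complex.I * fderiv ℝ (pdy f) z v))) := by
  have hdx : DifferentiableAt ℝ (pdx f) z := diffAt_fd hf 1
  have hdy : DifferentiableAt ℝ (pdy f) z := diffAt_fd hf Complex.I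
  have hinner : DifferentiableAt ℝ (fun w => (1 / 2 : ℂ) * (pdx f w + Complex.I * pdy f w)) z :=
    ((hdx.add (hdy.const_mul Complex.I)).const_mul _)
  have hconj : DifferentiableAt ℝ
      (fun w => (starRingEnd ℂ) ((1 / 2 : ℂ) * (pdx f w + Complex.I * pdy f w))) z := by
    have h : (fun w => (starRingEnd ℂ) ((1 / 2 : ℂ) * (pdx f w + Complex.I * pdy f w)))
        = fun w => star ((1 / 2 : ℂ) * (pdx f w + Complex.I * pdy f w)) := rfl
    rw [h]; exact hinner.star
  have hyk : DifferentiableAt ℝ (fun w : ℂ => ((w.im : ℂ)) ^ k) z := differentiableAt_ypow k hz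
  have h1 : DifferentiableAt ℝ (fun w : ℂ => 2 * Complex.I * ((w.im : ℂ)) ^ k) z :=
    hyk.const_mul _
  have hx : xiOp k f = fun w => (2 * Complex.I * ((w.im : ℂ)) ^ k) *
      ((starRingEnd ℂ) ((1 / 2 : ℂ) * (pdx f w + Complex.I * pdy f w))) := rfl
  rw [hx, fdapply_mul h1 hconj, fdapply_const_mul hyk, fdapply_ypow k hz, fdapply_conj,
    fdapply_const_mul (f := fun w => pdx f w + Complex.I * pdy f w)
      (hdx.add (hdy.const_mul Complex.I)),
    fdapply_add hdx (hdy.const_mul Complex.I),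
    fdapply_const_mul hdy]
  unfold pdx pdy
  ring

lemma pdx_xiOp (k : ℤ) (hz : z.im ≠ 0) (hf : ContDiffAt ℝ ((⊤:ℕ∞) : WithTop ℕ∞) f z) :
    pdx (xiOp k f) z =
      2 * Complex.I * ((z.im : ℂ)) ^ k * (starRingEnd ℂ)
          ((1 / 2) * (pdx (pdx f) z + Complex.I * pdx (pdy f) z)) := by
  have h := fdapply_xiOp k hz hf 1
  unfold pdx pdy at h ⊢
  rw [h]
  simp
  ring

lemma pdy_xiOp (k : ℤ) (hz : z.im ≠ 0) (hf : ContDiffAt ℝ ((⊤:ℕ∞) : WithTop ℕ∞) f z) :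
    pdy (xiOp k f) z =
      2 * Complex.I * ((k : ℂ) * ((z.im : ℂ)) ^ (k - 1)
          * (starRingEnd ℂ) ((1 / 2) * (pdx f z + Complex.I * pdy f z))
        + ((z.im : ℂ)) ^ k * (starRingEnd ℂ)
            ((1 / 2) * (pdy (pdx f) z + Complex.I * pdy (pdy f) z))) := by
  have h := fdapply_xiOp k hz hf Complex.I
  unfold pdx pdy at h ⊢
  rw [h]
  simp

/-! #### The factorization `Δ_k = ξ_{2-k} ∘ ξ_k` -/

lemma xiOp_xiOp (k : ℤ) (hz : z.im ≠ 0) (hf : ContDiffAt ℝ ((⊤:ℕ∞) : WithTop ℕ∞) f z) :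
    xiOp (2 - k) (xiOp k f) z = laplacian k f z := by
  have hy : ((z.im : ℂ)) ≠ 0 := Complex.ofReal_ne_zero.mpr hz
  have hcomm : pdx (pdy f) z = pdy (pdx f) z := pdx_pdy_comm hf
  have hxx := pdx_xiOp k hz hf
  have hyy := pdy_xiOp k hz hf
  rw [show xiOp (2 - k) (xiOp k f) z = 2 * Complex.I * ((z.im : ℂ)) ^ (2 - k) *
      (starRingEnd ℂ) ((1 / 2) * (pdx (xiOp k f) z + Complex.I * pdy (xiOp k f) z)) from rfl,
    hxx, hyy, hcomm]
  unfold laplacian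
  -- eliminate conjugations
  simp only [map_mul, map_add, map_sub, map_one, map_div₀, map_ofNat, Complex.conj_conj,
    Complex.conj_I, map_zpow₀, Complex.conj_ofReal, map_intCast]
  -- now a rational identity in y
  have e1 : ((z.im : ℂ)) ^ (2 - k) = ((z.im : ℂ)) * ((z.im : ℂ)) / ((z.im : ℂ)) ^ k := by
    rw [zpow_sub₀ hy, zpow_two]
  have e2 : ((z.im : ℂ)) ^ (k - 1) = ((z.im : ℂ)) ^ k / ((z.im : ℂ)) := by
    rw [zpow_sub₀ hy, zpow_one]
  rw [e1, e2]
  have ht : ((z.im : ℂ)) ^ k ≠ 0 := zpow_ne_zero _ hy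
  field_simp [ht, hy]
  have h2 : Complex.I ^ 2 = -1 := Complex.I_sq
  have h3 : Complex.I ^ 3 = -Complex.I := by rw [pow_succ, h2]; ring
  have h4 : Complex.I ^ 4 = 1 := by rw [show (4:ℕ) = 2*2 from rfl, pow_mul, h2]; ring
  ring_nf
  simp only [h2, h3, h4, map_neg, Complex.conj_I, neg_neg]
  have c1 : ((z.im:ℂ))^k * (((z.im:ℂ))^k)⁻¹ = 1 := mul_inv_cancel₀ ht
  have c2 : ((z.im:ℂ)) * ((z.im:ℂ))⁻¹ = 1 := mul_inv_cancel₀ hy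
  linear_combination
    (-((z.im:ℂ)) * pdy (pdy f) z - (k:ℂ) * pdy f z) * h2

/-! #### Conjugate-linearity of `xiOp` -/

lemma xiOp_sub_const_mul (k : ℤ) (lam : ℂ)
    (hu : DifferentiableAt ℝ u z) (hv : DifferentiableAt ℝ v z) :
    xiOp k (fun w => u w - lam * v w) z = xiOp k u z - (starRingEnd ℂ) lam * xiOp k v z := by
  unfold xiOp pdx pdy
  rw [fdapply_sub hu (hv.const_mul lam), fdapply_sub hu (hv.const_mul lam),
    fdapply_const_mul hv, fdapply_const_mul hv]
  simp only [map_mul, map_add, map_sub, map_one, map_div₀, map_ofNat, Complex.conj_I]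
  ring

/-! #### The intertwining relation -/

lemma xi_intertwine (k : ℤ) (lam : ℂ) (f : ℂ → ℂ)
    (hf : ContDiff ℝ ((⊤:ℕ∞) : WithTop ℕ∞) f) {z : ℂ} (hz : 0 < z.im) :
    laplacian (2 - k) (xiOp k f) z - (starRingEnd ℂ) lam * xiOp k f z
      = xiOp k (fun w => laplacian k f w - lam * f w) z := by
  have hne : z.im ≠ 0 := ne_of_gt hz
  have key : laplacian (2 - k) (xiOp k f) z = xiOp k (laplacian k f) z := by
    have e1 : xiOp (2 - (2 - k)) (xiOp (2 - k) (xiOp k f)) z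
        = laplacian (2 - k) (xiOp k f) z :=
      xiOp_xiOp (2 - k) hne (contDiffAt_xiOp k hf hne)
    have e2 : xiOp (2 - k) (xiOp k f) =ᶠ[nhds z] laplacian k f := by
      have hU : {w : ℂ | w.im ≠ 0} ∈ nhds z :=
        (isOpen_ne.preimage Complex.continuous_im).mem_nhds hne
      filter_upwards [hU] with w hw
      exact xiOp_xiOp k hw hf.contDiffAt
    calc laplacian (2 - k) (xiOp k f) z
        = xiOp (2 - (2 - k)) (xiOp (2 - k) (xiOp k f)) z := e1.symm
      _ = xiOp k (xiOp (2 - k) (xiOp k f)) z := by norm_num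
      _ = xiOp k (laplacian k f) z := xiOp_congr e2
  rw [key]
  exact (xiOp_sub_const_mul k lam
    ((contDiff_laplacian k hf).differentiable (by simp) z)
    (hf.differentiable (by simp) z)).symm

end Aux

/-- if `(Δ_k - λ)^m f = 0` then `(Δ_{2-k} - conj(λ))^m (ξ_k f) = 0`. -/
theorem xi_polyharmonic (k : ℤ) (lam : ℂ) (m : ℕ) (hm : 1 ≤ m)
    (f : ℂ → ℂ) (hf : ContDiff ℝ (⊤ : ℕ∞) f)
    (hpoly : ∀ z : ℂ, 0 < z.im →
      (fun g : ℂ → ℂ => fun w => laplacian k g w - lam * g w)^[m] f z = 0) :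
    ∀ z : ℂ, 0 < z.im →
      (fun g : ℂ → ℂ => fun w =>
        laplacian (2 - k) g w - (starRingEnd ℂ) lam * g w)^[m] (xiOp k f) z = 0 := by
  have hf' : ContDiff ℝ ((⊤:ℕ∞) : WithTop ℕ∞) f := hf.of_le (by simp)
  set T : (ℂ → ℂ) → (ℂ → ℂ) := fun g : ℂ → ℂ => fun w => laplacian k g w - lam * g w with hT
  set S : (ℂ → ℂ) → (ℂ → ℂ) :=
    fun g : ℂ → ℂ => fun w => laplacian (2 - k) g w - (starRingEnd ℂ) lam * g w with hS
  have hup : ∀ z : ℂ, 0 < z.im → {w : ℂ | 0 < w.im} ∈ nhds z := fun z hz =>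
    (isOpen_lt continuous_const Complex.continuous_im).mem_nhds hz
  have hsmooth : ∀ j : ℕ, ContDiff ℝ ((⊤:ℕ∞) : WithTop ℕ∞) (T^[j] f) := by
    intro j
    induction j with
    | zero => simpa using hf'
    | succ j ih =>
      rw [Function.iterate_succ_apply']
      exact (contDiff_laplacian k ih).sub (contDiff_const.mul ih)
  have main : ∀ j : ℕ, ∀ z : ℂ, 0 < z.im → S^[j] (xiOp k f) z = xiOp k (T^[j] f) z := by
    intro j
    induction j with
    | zero => intro z _; rfl
    | succ j ih =>
      intro z hz
      rw [Function.iterate_succ_apply', Function.iterate_succ_apply']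
      have heq : S^[j] (xiOp k f) =ᶠ[nhds z] xiOp k (T^[j] f) := by
        filter_upwards [hup z hz] with w hw
        exact ih w hw
      show laplacian (2 - k) (S^[j] (xiOp k f)) z
          - (starRingEnd ℂ) lam * (S^[j] (xiOp k f)) z
        = xiOp k (fun w => laplacian k (T^[j] f) w - lam * (T^[j] f) w) z
      rw [laplacian_congr heq, heq.self_of_nhds]
      exact xi_intertwine k lam _ (hsmooth j) hz
  intro z hz
  rw [main m z hz]
  have hzero : T^[m] f =ᶠ[nhds z] (fun _ => (0 : ℂ)) := by
    filter_upwards [hup z hz] with w hw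
    exact hpoly w hw
  rw [xiOp_congr hzero]
  unfold xiOp pdx pdy
  simp
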